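/- arXiv:2006.16814 — 5 statements merged into one kernel-verified Lean document; each statement's English description precedes it below -/
import Mathlib

section
/- Let A be a Banach algebra and B a Banach A-bimodule such that every continuous derivation D : A** → B* is weak*-weak*-continuous. If Z^ℓ_{B**}(A**) = A** and H^1(A, B*) = {0}, then H^1(A**, B*) = {0}. -/
/-!
Common definitions: duals, biduals, Arens products, module actions,
derivations, first cohomology-vanishing predicates, weak-star continuity.
-/

noncomputable section

open ContinuousLinearMap Filter Topology Function

namespace ArensPaper

variable (𝕜 : Type) [RCLike 𝕜]

/-- The (topological) dual of a normed space. -/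
abbrev Du (X : Type) [NormedAddCommGroup X] [NormedSpace 𝕜 X] : Type :=
  StrongDual 𝕜 X

/-- The bidual of a normed space. -/
abbrev Bi (X : Type) [NormedAddCommGroup X] [NormedSpace 𝕜 X] : Type :=
  Du 𝕜 (Du 𝕜 X)

/-- Canonical embedding of a normed space into its bidual. -/
abbrev inDu (X : Type) [NormedAddCommGroup X] [NormedSpace 𝕜 X] : X →L[𝕜] Bi 𝕜 X :=
  NormedSpace.inclusionInDoubleDual 𝕜 X

variable {X Y Z : Type} [NormedAddCommGroup X] [NormedSpace 𝕜 X]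
  [NormedAddCommGroup Y] [NormedSpace 𝕜 Y] [NormedAddCommGroup Z] [NormedSpace 𝕜 Z]

/-- The transpose (Banach-space adjoint) of a continuous linear map. -/
def tr (T : X →L[𝕜] Y) : Du 𝕜 Y →L[𝕜] Du 𝕜 X :=
  (compL 𝕜 X Y 𝕜).flip T

/-- The second transpose of a continuous linear map. -/
def bitr (T : X →L[𝕜] Y) : Bi 𝕜 X →L[𝕜] Bi 𝕜 Y :=
  tr 𝕜 (tr 𝕜 T)

/-- The adjoint of a continuous bilinear map `m : X × Y → Z`:
`⟨adj m z' x, y⟩ = ⟨z', m x y⟩`. -/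
def adj (m : X →L[𝕜] Y →L[𝕜] Z) : Du 𝕜 Z →L[𝕜] X →L[𝕜] Du 𝕜 Y :=
  ((compL 𝕜 X (Y →L[𝕜] Z) (Du 𝕜 Y)).flip m).comp (compL 𝕜 Y Z 𝕜)

/-- The first Arens (triple adjoint) extension of a continuous bilinear map
to the biduals: `⟨ar1 m F G, z'⟩ = ⟨F, fun x => ⟨G, fun y => ⟨z', m x y⟩⟩⟩`. -/
def ar1 (m : X →L[𝕜] Y →L[𝕜] Z) : Bi 𝕜 X →L[𝕜] Bi 𝕜 Y →L[𝕜] Bi 𝕜 Z :=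
  adj 𝕜 (adj 𝕜 (adj 𝕜 m))

/-- The second Arens extension of a continuous bilinear map. -/
def ar2 (m : X →L[𝕜] Y →L[𝕜] Z) : Bi 𝕜 X →L[𝕜] Bi 𝕜 Y →L[𝕜] Bi 𝕜 Z :=
  (ar1 𝕜 m.flip).flip

/-- A continuous bilinear map is Arens regular if its two Arens extensions agree. -/
def ArensRegularBil (m : X →L[𝕜] Y →L[𝕜] Z) : Prop :=
  ar1 𝕜 m = ar2 𝕜 m

/-- A map between dual spaces is weak*-weak*-continuous. -/
def WStarCont (f : Du 𝕜 X → Du 𝕜 Y) : Prop :=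
  Continuous fun x : WeakDual 𝕜 X => (show WeakDual 𝕜 Y from f (show Du 𝕜 X from x))

/-- A map from a dual space to a normed space is weak*-weak-continuous. -/
def WStarWeakCont {B : Type} [NormedAddCommGroup B] [NormedSpace 𝕜 B]
    (f : Du 𝕜 X → B) : Prop :=
  Continuous fun x : WeakDual 𝕜 X => (show WeakSpace 𝕜 B from f (show Du 𝕜 X from x))

/-- `D` is a derivation with respect to a product `p` on `C` and module actions
`l`, `r` of `C` on `E`. -/
def IsDer {C E : Type} [NormedAddCommGroup C] [NormedSpace 𝕜 C]
    [NormedAddCommGroup E] [NormedSpace 𝕜 E]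
    (p : C → C → C) (l : C → E → E) (r : E → C → E) (D : C →L[𝕜] E) : Prop :=
  ∀ a b : C, D (p a b) = l a (D b) + r (D a) b

/-- `D` is an inner derivation for the module actions `l`, `r`. -/
def IsInner {C E : Type} [NormedAddCommGroup C] [NormedSpace 𝕜 C]
    [NormedAddCommGroup E] [NormedSpace 𝕜 E]
    (l : C → E → E) (r : E → C → E) (D : C →L[𝕜] E) : Prop :=
  ∃ x : E, ∀ a : C, D a = l a x - r x a

/-- A Banach algebra has a left bounded approximate identity. -/
def HasLBAI (A : Type) [NonUnitalNormedRing A] : Prop :=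
  ∃ (ι : Type) (L : Filter ι) (e : ι → A), L.NeBot ∧ (∃ c : ℝ, ∀ i, ‖e i‖ ≤ c) ∧
    ∀ a : A, Tendsto (fun i => e i * a) L (𝓝 a)

/-- A Banach bimodule structure on `E` over the "Banach algebra" `(C, p)`. -/
structure BimodStr {C : Type} [NormedAddCommGroup C] [NormedSpace 𝕜 C]
    (p : C →L[𝕜] C →L[𝕜] C) (E : Type) [NormedAddCommGroup E] [NormedSpace 𝕜 E] :
    Type where
  l : C →L[𝕜] E →L[𝕜] E
  r : E →L[𝕜] C →L[𝕜] E
  l_mul : ∀ a b x, l (p a b) x = l a (l b x)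
  r_mul : ∀ x a b, r (r x a) b = r x (p a b)
  lr : ∀ a x b, r (l a x) b = l a (r x b)

/-- A bundled Banach bimodule over the "Banach algebra" `(C, p)`. -/
structure BBimod {C : Type} [NormedAddCommGroup C] [NormedSpace 𝕜 C]
    (p : C →L[𝕜] C →L[𝕜] C) : Type 1 where
  E : Type
  [grp : NormedAddCommGroup E]
  [mod : NormedSpace 𝕜 E]
  [cpl : CompleteSpace E]
  str : BimodStr 𝕜 p E

attribute [instance] BBimod.grp BBimod.mod BBimod.cpl

/-- Amenability of the "Banach algebra" `(C, p)`: every continuous derivation into the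
dual of any Banach bimodule is inner. -/
def IsAmenableP {C : Type} [NormedAddCommGroup C] [NormedSpace 𝕜 C]
    (p : C →L[𝕜] C →L[𝕜] C) : Prop :=
  ∀ (M : BBimod 𝕜 p) (D : C →L[𝕜] Du 𝕜 M.E),
    IsDer 𝕜 (fun a b => p a b)
      (fun a f => f.comp (M.str.r.flip a)) (fun f a => f.comp (M.str.l a)) D →
    IsInner 𝕜 (fun a f => f.comp (M.str.r.flip a)) (fun f a => f.comp (M.str.l a)) D

/-- Weak amenability of a Banach algebra: every continuous derivation into the dual
(with the dual actions of the regular bimodule) is inner. -/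
def WeaklyAmenable (A : Type) [NonUnitalNormedRing A] [NormedSpace 𝕜 A]
    [IsScalarTower 𝕜 A A] [SMulCommClass 𝕜 A A] : Prop :=
  ∀ D : A →L[𝕜] Du 𝕜 A,
    IsDer 𝕜 (fun a b => a * b)
      (fun a f => f.comp ((ContinuousLinearMap.mul 𝕜 A).flip a))
      (fun f a => f.comp (ContinuousLinearMap.mul 𝕜 A a)) D →
    IsInner 𝕜 (fun a f => f.comp ((ContinuousLinearMap.mul 𝕜 A).flip a))
      (fun f a => f.comp (ContinuousLinearMap.mul 𝕜 A a)) D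

/-- The embedding of the predual `X` into the dual `A*`, given an identification
`j : A ≃ X*`. -/
def predualEmbed {A X : Type} [NormedAddCommGroup A] [NormedSpace 𝕜 A]
    [NormedAddCommGroup X] [NormedSpace 𝕜 X] (j : A ≃ₗᵢ[𝕜] Du 𝕜 X) (x : X) : Du 𝕜 A :=
  (inDu 𝕜 X x).comp j.toLinearIsometry.toContinuousLinearMap

/-- `j : A ≃ X*` makes `A` a dual Banach algebra: the image of `X` in `A*` is a
submodule of `A*` for the dual actions. -/
def IsDualBanachAlgebra {A X : Type} [NonUnitalNormedRing A] [NormedSpace 𝕜 A]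
    [IsScalarTower 𝕜 A A] [SMulCommClass 𝕜 A A]
    [NormedAddCommGroup X] [NormedSpace 𝕜 X] (j : A ≃ₗᵢ[𝕜] Du 𝕜 X) : Prop :=
  ∀ (a : A) (x : X),
    ((predualEmbed 𝕜 j x).comp ((ContinuousLinearMap.mul 𝕜 A).flip a)
        ∈ Set.range (predualEmbed 𝕜 j)) ∧
    ((predualEmbed 𝕜 j x).comp (ContinuousLinearMap.mul 𝕜 A a)
        ∈ Set.range (predualEmbed 𝕜 j))

/-- A normed space is weakly sequentially complete. -/
def WSCSpace (E : Type) [NormedAddCommGroup E] [NormedSpace 𝕜 E] : Prop :=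
  ∀ f : ℕ → E,
    (∀ φ : Du 𝕜 E, ∃ L : 𝕜, Tendsto (fun n => φ (f n)) atTop (𝓝 L)) →
    ∃ e : E, ∀ φ : Du 𝕜 E, Tendsto (fun n => φ (f n)) atTop (𝓝 (φ e))

/-- Left multiplication by `a ∈ A` restricted to an ideal `I`. -/
def mulLRes {A : Type} [NonUnitalNormedRing A] [NormedSpace 𝕜 A]
    [IsScalarTower 𝕜 A A] [SMulCommClass 𝕜 A A] (I : Submodule 𝕜 A) (a : A)
    (h : ∀ x : I, a * (x : A) ∈ I) : I →L[𝕜] I :=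
  ((ContinuousLinearMap.mul 𝕜 A a).comp I.subtypeL).codRestrict I h

/-- Right multiplication by `a ∈ A` restricted to an ideal `I`. -/
def mulRRes {A : Type} [NonUnitalNormedRing A] [NormedSpace 𝕜 A]
    [IsScalarTower 𝕜 A A] [SMulCommClass 𝕜 A A] (I : Submodule 𝕜 A) (a : A)
    (h : ∀ x : I, (x : A) * a ∈ I) : I →L[𝕜] I :=
  (((ContinuousLinearMap.mul 𝕜 A).flip a).comp I.subtypeL).codRestrict I h


/-- Connes-amenability of the bidual algebra `(A**, p)`: every weak*-weak*-continuous
derivation into a normal dual Banach bimodule is inner. -/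
def ConnesAmenableBidual {A : Type} [NonUnitalNormedRing A] [NormedSpace 𝕜 A]
    [IsScalarTower 𝕜 A A] [SMulCommClass 𝕜 A A]
    (p : Bi 𝕜 A →L[𝕜] Bi 𝕜 A →L[𝕜] Bi 𝕜 A) : Prop :=
  ∀ (X : Type) [NormedAddCommGroup X] [NormedSpace 𝕜 X] [CompleteSpace X]
    (M : BimodStr 𝕜 p (Du 𝕜 X)),
    (∀ f : Du 𝕜 X, WStarCont 𝕜 (fun m : Bi 𝕜 A => M.l m f) ∧
        WStarCont 𝕜 (fun m : Bi 𝕜 A => M.r f m)) →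
    ∀ D : Bi 𝕜 A →L[𝕜] Du 𝕜 X,
      IsDer 𝕜 (fun m n => p m n) (fun m f => M.l m f) (fun f m => M.r f m) D →
      WStarCont 𝕜 (fun m => D m) →
      IsInner 𝕜 (fun m f => M.l m f) (fun f m => M.r f m) D

/-!
Restricted to `A`, the derivation `D` is a derivation into `B*`, hence inner, implemented by some
`f ∈ B*`. Weak*-continuous functionals on a dual space are evaluations, so a weak*-continuous map
on `A**` is determined by its values on `A`; thus `D` is the weak*-continuous extension
`m ↦ (b ↦ m(a ↦ f(b·a) − f(a·b)))` of that inner derivation. The hypothesis `Z^ℓ_{B**}(A**) = A**`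
is what makes the first and second Arens actions of `A**` on `B**` agree, and this identifies the
extension with the inner derivation of `A**` at `f`.
-/

section

variable {𝕜}

theorem exists_eq_inDu_of_continuous_weakDual (φ : Bi 𝕜 X)
    (hφ : Continuous fun μ : WeakDual 𝕜 X => φ μ) : ∃ x : X, φ = inDu 𝕜 X x := by
  obtain ⟨x, hx⟩ := LinearMap.dualEmbedding_surjective (topDualPairing 𝕜 X)
    (⟨φ.toLinearMap, hφ⟩ : StrongDual 𝕜 (WeakDual 𝕜 X))
  exact ⟨x, ext fun μ => (DFunLike.congr_fun hx μ).symm⟩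

theorem eq_of_continuous_weakDual_of_apply_inDu {φ ψ : Du 𝕜 (Bi 𝕜 X)}
    (hφ : Continuous fun F : WeakDual 𝕜 (Du 𝕜 X) => φ F)
    (hψ : Continuous fun F : WeakDual 𝕜 (Du 𝕜 X) => ψ F)
    (h : ∀ x, φ (inDu 𝕜 X x) = ψ (inDu 𝕜 X x)) : φ = ψ := by
  obtain ⟨μ, hμ⟩ := exists_eq_inDu_of_continuous_weakDual (φ - ψ) (hφ.sub hψ)
  have hμ0 : μ = 0 := ext fun x => by
    simpa [sub_eq_zero.mpr (h x)] using (DFunLike.congr_fun hμ (inDu 𝕜 X x)).symm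
  rw [← sub_eq_zero, hμ, hμ0, map_zero]

theorem wStarCont_tr (T : X →L[𝕜] Y) : WStarCont 𝕜 (tr 𝕜 T) :=
  WeakDual.continuous_of_continuous_eval fun x => WeakDual.eval_continuous (T x)

theorem eq_tr_flip_comp_inDu {D : Bi 𝕜 X →L[𝕜] Du 𝕜 Y} (hD : WStarCont 𝕜 D) :
    D = tr 𝕜 (D.comp (inDu 𝕜 X)).flip := by
  ext m y
  have := eq_of_continuous_weakDual_of_apply_inDu (φ := (apply 𝕜 𝕜 y).comp D)
    (ψ := (apply 𝕜 𝕜 y).comp (tr 𝕜 (D.comp (inDu 𝕜 X)).flip))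
    ((WeakDual.eval_continuous y).comp hD) ((WeakDual.eval_continuous y).comp (wStarCont_tr _))
    fun x => rfl
  exact DFunLike.congr_fun this m

theorem ar1_inDu_inDu (m : X →L[𝕜] Y →L[𝕜] Z) (x : X) (y : Y) :
    ar1 𝕜 m (inDu 𝕜 X x) (inDu 𝕜 Y y) = inDu 𝕜 Z (m x y) := rfl

theorem ar1_eq_ar2_of_wStarCont (m : X →L[𝕜] Y →L[𝕜] Z) {x'' : Bi 𝕜 X}
    (hx : WStarCont 𝕜 (ar1 𝕜 m x'')) : ar1 𝕜 m x'' = ar2 𝕜 m x'' := by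
  ext G h
  have := eq_of_continuous_weakDual_of_apply_inDu (φ := (apply 𝕜 𝕜 h).comp (ar1 𝕜 m x''))
    (ψ := (apply 𝕜 𝕜 h).comp (ar2 𝕜 m x''))
    ((WeakDual.eval_continuous h).comp hx) (WeakDual.eval_continuous _) fun y => rfl
  exact DFunLike.congr_fun this G

section Bimodule

variable {A B : Type} [NonUnitalNormedRing A] [NormedSpace 𝕜 A] [IsScalarTower 𝕜 A A]
  [SMulCommClass 𝕜 A A] [NormedAddCommGroup B] [NormedSpace 𝕜 B]
  (M : BimodStr 𝕜 (ContinuousLinearMap.mul 𝕜 A) B)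

theorem isDer_comp_inDu {D : Bi 𝕜 A →L[𝕜] Du 𝕜 B}
    (hD : IsDer 𝕜 (fun m n => ar1 𝕜 (ContinuousLinearMap.mul 𝕜 A) m n)
      (fun (m : Bi 𝕜 A) (F : Du 𝕜 (Bi 𝕜 B)) => F.comp ((ar1 𝕜 M.r).flip m))
      (fun (F : Du 𝕜 (Bi 𝕜 B)) (m : Bi 𝕜 A) => F.comp (ar1 𝕜 M.l m))
      ((inDu 𝕜 (Du 𝕜 B)).comp D)) :
    IsDer 𝕜 (fun a b => a * b)
      (fun (a : A) (f : Du 𝕜 B) => f.comp (M.r.flip a))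
      (fun (f : Du 𝕜 B) (a : A) => f.comp (M.l a)) (D.comp (inDu 𝕜 A)) := by
  intro a b
  apply (NormedSpace.inclusionInDoubleDualLi 𝕜 (E := Du 𝕜 B)).injective
  have h := hD (inDu 𝕜 A a) (inDu 𝕜 A b)
  dsimp only at h ⊢
  rw [ar1_inDu_inDu] at h
  exact h.trans (ext fun F => (map_add F _ _).symm)

end Bimodule

end

theorem statement0_general {𝕜 : Type} [RCLike 𝕜] {A : Type}
    [NonUnitalNormedRing A] [NormedSpace 𝕜 A] [IsScalarTower 𝕜 A A]
    [SMulCommClass 𝕜 A A]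
    {B : Type} [NormedAddCommGroup B] [NormedSpace 𝕜 B]
    (M : BimodStr 𝕜 (ContinuousLinearMap.mul 𝕜 A) B)
    -- every continuous derivation `D : A** → B*` is weak*-weak*-continuous
    (hwc : ∀ D : Bi 𝕜 A →L[𝕜] Du 𝕜 B,
      IsDer 𝕜 (fun m n => ar1 𝕜 (ContinuousLinearMap.mul 𝕜 A) m n)
        (fun (m : Bi 𝕜 A) (F : Du 𝕜 (Bi 𝕜 B)) => F.comp ((ar1 𝕜 M.r).flip m))
        (fun (F : Du 𝕜 (Bi 𝕜 B)) (m : Bi 𝕜 A) => F.comp (ar1 𝕜 M.l m))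
        ((inDu 𝕜 (Du 𝕜 B)).comp D) →
      WStarCont 𝕜 fun m => D m)
    -- `Z^ℓ_{B**}(A**) = A**`
    (hz : ∀ m : Bi 𝕜 A, WStarCont 𝕜 fun F : Bi 𝕜 B => ar1 𝕜 M.l m F)
    -- `H^1(A, B*) = {0}`
    (h1 : ∀ d : A →L[𝕜] Du 𝕜 B,
      IsDer 𝕜 (fun a b => a * b)
        (fun (a : A) (f : Du 𝕜 B) => f.comp (M.r.flip a))
        (fun (f : Du 𝕜 B) (a : A) => f.comp (M.l a)) d →
      IsInner 𝕜 (fun (a : A) (f : Du 𝕜 B) => f.comp (M.r.flip a))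
        (fun (f : Du 𝕜 B) (a : A) => f.comp (M.l a)) d) :
    -- `H^1(A**, B*) = {0}`
    ∀ D : Bi 𝕜 A →L[𝕜] Du 𝕜 B,
      IsDer 𝕜 (fun m n => ar1 𝕜 (ContinuousLinearMap.mul 𝕜 A) m n)
        (fun (m : Bi 𝕜 A) (F : Du 𝕜 (Bi 𝕜 B)) => F.comp ((ar1 𝕜 M.r).flip m))
        (fun (F : Du 𝕜 (Bi 𝕜 B)) (m : Bi 𝕜 A) => F.comp (ar1 𝕜 M.l m))
        ((inDu 𝕜 (Du 𝕜 B)).comp D) →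
      ∃ f : Du 𝕜 B, ∀ m : Bi 𝕜 A,
        inDu 𝕜 (Du 𝕜 B) (D m) =
          (inDu 𝕜 (Du 𝕜 B) f).comp ((ar1 𝕜 M.r).flip m) -
            (inDu 𝕜 (Du 𝕜 B) f).comp (ar1 𝕜 M.l m) := by
  intro D hD
  obtain ⟨f, hf⟩ := h1 _ (isDer_comp_inDu M hD)
  have hD_eq : D = tr 𝕜 (adj 𝕜 M.r f) - tr 𝕜 (adj 𝕜 M.l.flip f) := by
    rw [eq_tr_flip_comp_inDu (hwc D hD)]
    ext m b
    change m _ = m _ - m _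
    rw [← map_sub]
    exact congrArg m (ext fun a => DFunLike.congr_fun (hf a) b)
  refine ⟨f, fun m => ext fun F => ?_⟩
  rw [hD_eq, ar1_eq_ar2_of_wStarCont M.l (hz m)]
  exact map_sub F _ _

/-- Let `A` be a Banach algebra and `B` a Banach `A`-bimodule such that every continuous
derivation `D : A** → B*` is weak*-weak*-continuous.  If `Z^ℓ_{B**}(A**) = A**` and
`H^1(A, B*) = {0}`, then `H^1(A**, B*) = {0}`.
Here `A**` carries the first Arens product, `B*` is viewed inside `B***`, which is an
`A**`-bimodule as the dual of the Arens `A**`-bimodule `B**`. -/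
theorem statement0 {𝕜 : Type} [RCLike 𝕜] {A : Type}
    [NonUnitalNormedRing A] [NormedSpace 𝕜 A] [IsScalarTower 𝕜 A A]
    [SMulCommClass 𝕜 A A] [CompleteSpace A]
    {B : Type} [NormedAddCommGroup B] [NormedSpace 𝕜 B] [CompleteSpace B]
    (M : BimodStr 𝕜 (ContinuousLinearMap.mul 𝕜 A) B)
    -- every continuous derivation `D : A** → B*` is weak*-weak*-continuous
    (hwc : ∀ D : Bi 𝕜 A →L[𝕜] Du 𝕜 B,
      IsDer 𝕜 (fun m n => ar1 𝕜 (ContinuousLinearMap.mul 𝕜 A) m n)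
        (fun (m : Bi 𝕜 A) (F : Du 𝕜 (Bi 𝕜 B)) => F.comp ((ar1 𝕜 M.r).flip m))
        (fun (F : Du 𝕜 (Bi 𝕜 B)) (m : Bi 𝕜 A) => F.comp (ar1 𝕜 M.l m))
        ((inDu 𝕜 (Du 𝕜 B)).comp D) →
      WStarCont 𝕜 fun m => D m)
    -- `Z^ℓ_{B**}(A**) = A**`
    (hz : ∀ m : Bi 𝕜 A, WStarCont 𝕜 fun F : Bi 𝕜 B => ar1 𝕜 M.l m F)
    -- `H^1(A, B*) = {0}`
    (h1 : ∀ d : A →L[𝕜] Du 𝕜 B,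
      IsDer 𝕜 (fun a b => a * b)
        (fun (a : A) (f : Du 𝕜 B) => f.comp (M.r.flip a))
        (fun (f : Du 𝕜 B) (a : A) => f.comp (M.l a)) d →
      IsInner 𝕜 (fun (a : A) (f : Du 𝕜 B) => f.comp (M.r.flip a))
        (fun (f : Du 𝕜 B) (a : A) => f.comp (M.l a)) d) :
    -- `H^1(A**, B*) = {0}`
    ∀ D : Bi 𝕜 A →L[𝕜] Du 𝕜 B,
      IsDer 𝕜 (fun m n => ar1 𝕜 (ContinuousLinearMap.mul 𝕜 A) m n)
        (fun (m : Bi 𝕜 A) (F : Du 𝕜 (Bi 𝕜 B)) => F.comp ((ar1 𝕜 M.r).flip m))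
        (fun (F : Du 𝕜 (Bi 𝕜 B)) (m : Bi 𝕜 A) => F.comp (ar1 𝕜 M.l m))
        ((inDu 𝕜 (Du 𝕜 B)).comp D) →
      ∃ f : Du 𝕜 B, ∀ m : Bi 𝕜 A,
        inDu 𝕜 (Du 𝕜 B) (D m) =
          (inDu 𝕜 (Du 𝕜 B) f).comp ((ar1 𝕜 M.r).flip m) -
            (inDu 𝕜 (Du 𝕜 B) f).comp (ar1 𝕜 M.l m) :=
  statement0_general M hwc hz h1

end ArensPaper
end
end

section
/- Let A be a Banach algebra and B a Banach A-bimodule such that A**·B ⊆ B and B·A** ⊆ B (with respect to the Arens extensions of the module actions) and such that every continuous derivation from A** into B is weak*-weak-continuous. If H^1(A, B) = {0}, then H^1(A**, B) = {0}. -/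
/-!
Common definitions: duals, biduals, Arens products, module actions,
derivations, first cohomology-vanishing predicates, weak-star continuity.
-/

noncomputable section

open ContinuousLinearMap Filter Topology Function

namespace ArensPaper

variable (𝕜 : Type) [RCLike 𝕜]

variable {X Y Z : Type} [NormedAddCommGroup X] [NormedSpace 𝕜 X]
  [NormedAddCommGroup Y] [NormedSpace 𝕜 Y] [NormedAddCommGroup Z] [NormedSpace 𝕜 Z]

/-!
A derivation `D : A** → B` restricts to a derivation of `A`, hence to an inner derivation `δ_x`.
On `A**`, both `D` and `δ_x` are weak*-continuous: `D` by hypothesis, and `δ_x` because the first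
Arens extension of a bilinear map is weak*-continuous in its left variable, and in its right
variable once the left one lies in the canonical image. Two such maps agreeing on the
weak*-dense image of `A` coincide, since a weak*-continuous functional on `A**` is evaluation at
a point of `A*`.
-/

section

variable {𝕜}

theorem continuous_ar1_apply_left (m : X →L[𝕜] Y →L[𝕜] Z) (G : Bi 𝕜 Y) (z' : Du 𝕜 Z) :
    Continuous fun F : WeakDual 𝕜 (Du 𝕜 X) => ar1 𝕜 m (show Bi 𝕜 X from F) G z' :=
  WeakDual.eval_continuous (adj 𝕜 (adj 𝕜 m) G z')

theorem continuous_ar1_inDu_apply_right (m : X →L[𝕜] Y →L[𝕜] Z) (x : X) (z' : Du 𝕜 Z) :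
    Continuous fun G : WeakDual 𝕜 (Du 𝕜 Y) => ar1 𝕜 m (inDu 𝕜 X x) (show Bi 𝕜 Y from G) z' :=
  WeakDual.eval_continuous (adj 𝕜 m z' x)

theorem eq_zero_of_continuous_weakStar_of_inDu (K : Bi 𝕜 X →ₗ[𝕜] 𝕜)
    (hK : Continuous fun F : WeakDual 𝕜 (Du 𝕜 X) => K (show Bi 𝕜 X from F))
    (hX : ∀ x, K (inDu 𝕜 X x) = 0) : K = 0 := by
  let f : StrongDual 𝕜 (WeakBilin (topDualPairing 𝕜 (Du 𝕜 X))) := ⟨K, hK⟩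
  obtain ⟨φ, hφ⟩ := LinearMap.dualEmbedding_surjective (𝕜 := 𝕜) (E := Bi 𝕜 X)
    (F := Du 𝕜 X) (topDualPairing 𝕜 (Du 𝕜 X)) f
  have hK_eval : ∀ F, K F = F φ := fun F => (congrArg (· F) hφ).symm
  have hφ0 : φ = 0 := ContinuousLinearMap.ext fun x => by simpa [hK_eval] using hX x
  ext F
  simp [hK_eval, hφ0]

theorem ext_of_continuous_weakStar {T S : Bi 𝕜 X →L[𝕜] Du 𝕜 Y}
    (hT : ∀ y, Continuous fun F : WeakDual 𝕜 (Du 𝕜 X) => T (show Bi 𝕜 X from F) y)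
    (hS : ∀ y, Continuous fun F : WeakDual 𝕜 (Du 𝕜 X) => S (show Bi 𝕜 X from F) y)
    (h : ∀ x, T (inDu 𝕜 X x) = S (inDu 𝕜 X x)) : T = S := by
  ext F y
  have hK := eq_zero_of_continuous_weakStar_of_inDu ((apply 𝕜 𝕜 y).comp (T - S)).toLinearMap
    ((hT y).sub (hS y)) (fun x => by simp [h x])
  simpa [sub_eq_zero] using LinearMap.congr_fun hK F

theorem IsDer.comp_inDu {A E : Type} [NormedAddCommGroup A] [NormedSpace 𝕜 A]
    [NormedAddCommGroup E] [NormedSpace 𝕜 E] {p : A →L[𝕜] A →L[𝕜] A}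
    {l : A →L[𝕜] E →L[𝕜] E} {r : E →L[𝕜] A →L[𝕜] E} {D : Bi 𝕜 A →L[𝕜] E}
    (hD : IsDer 𝕜 (fun m n => ar1 𝕜 p m n) (fun m F => ar1 𝕜 l m F) (fun F m => ar1 𝕜 r F m)
      ((inDu 𝕜 E).comp D)) :
    IsDer 𝕜 (fun a b => p a b) (fun a x => l a x) (fun x a => r x a) (D.comp (inDu 𝕜 A)) := by
  intro a b
  have h := hD (inDu 𝕜 A a) (inDu 𝕜 A b)
  simp only [ContinuousLinearMap.comp_apply, ar1_inDu_inDu, ← map_add] at h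
  exact (NormedSpace.inclusionInDoubleDualLi 𝕜).injective h

end

theorem statement3_general {𝕜 : Type} [RCLike 𝕜] {A : Type}
    [NonUnitalNormedRing A] [NormedSpace 𝕜 A] [IsScalarTower 𝕜 A A]
    [SMulCommClass 𝕜 A A]
    {B : Type} [NormedAddCommGroup B] [NormedSpace 𝕜 B]
    (M : BimodStr 𝕜 (ContinuousLinearMap.mul 𝕜 A) B)
    -- every continuous derivation from `A**` into `B` is weak*-weak-continuous
    (hwc : ∀ D : Bi 𝕜 A →L[𝕜] B,
      IsDer 𝕜 (fun m n => ar1 𝕜 (ContinuousLinearMap.mul 𝕜 A) m n)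
        (fun (m : Bi 𝕜 A) (F : Bi 𝕜 B) => ar1 𝕜 M.l m F)
        (fun (F : Bi 𝕜 B) (m : Bi 𝕜 A) => ar1 𝕜 M.r F m)
        ((inDu 𝕜 B).comp D) →
      WStarWeakCont 𝕜 fun m => D m)
    -- `H^1(A, B) = {0}`
    (h1 : ∀ d : A →L[𝕜] B,
      IsDer 𝕜 (fun a b => a * b)
        (fun (a : A) (x : B) => M.l a x) (fun (x : B) (a : A) => M.r x a) d →
      IsInner 𝕜 (fun (a : A) (x : B) => M.l a x) (fun (x : B) (a : A) => M.r x a) d) :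
    -- `H^1(A**, B) = {0}`
    ∀ D : Bi 𝕜 A →L[𝕜] B,
      IsDer 𝕜 (fun m n => ar1 𝕜 (ContinuousLinearMap.mul 𝕜 A) m n)
        (fun (m : Bi 𝕜 A) (F : Bi 𝕜 B) => ar1 𝕜 M.l m F)
        (fun (F : Bi 𝕜 B) (m : Bi 𝕜 A) => ar1 𝕜 M.r F m)
        ((inDu 𝕜 B).comp D) →
      ∃ x : B, ∀ m : Bi 𝕜 A,
        inDu 𝕜 B (D m) = ar1 𝕜 M.l m (inDu 𝕜 B x) - ar1 𝕜 M.r (inDu 𝕜 B x) m := by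
  intro D hD
  obtain ⟨x, hx⟩ := h1 _ hD.comp_inDu
  have hD_inner : (inDu 𝕜 B).comp D = (ar1 𝕜 M.l).flip (inDu 𝕜 B x) - ar1 𝕜 M.r (inDu 𝕜 B x) :=
    ext_of_continuous_weakStar
      (fun φ => (WeakBilin.eval_continuous _ φ).comp (hwc D hD))
      (fun φ => (continuous_ar1_apply_left M.l _ φ).sub (continuous_ar1_inDu_apply_right M.r x φ))
      (fun a => by
        rw [sub_apply, flip_apply, ar1_inDu_inDu, ar1_inDu_inDu, ← map_sub, ← hx a]
        rfl)
  exact ⟨x, fun m => congr($hD_inner m)⟩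

/-- Let `A` be a Banach algebra and `B` a Banach `A`-bimodule with `A**·B ⊆ B` and
`B·A** ⊆ B` (for the Arens extensions of the module actions), such that every continuous
derivation from `A**` into `B` is weak*-weak-continuous.  If `H^1(A, B) = {0}`, then
`H^1(A**, B) = {0}`. -/
theorem statement3 {𝕜 : Type} [RCLike 𝕜] {A : Type}
    [NonUnitalNormedRing A] [NormedSpace 𝕜 A] [IsScalarTower 𝕜 A A]
    [SMulCommClass 𝕜 A A] [CompleteSpace A]
    {B : Type} [NormedAddCommGroup B] [NormedSpace 𝕜 B] [CompleteSpace B]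
    (M : BimodStr 𝕜 (ContinuousLinearMap.mul 𝕜 A) B)
    -- `A**·B ⊆ B` and `B·A** ⊆ B`
    (hmod : ∀ (m : Bi 𝕜 A) (b : B),
      ar1 𝕜 M.l m (inDu 𝕜 B b) ∈ Set.range (inDu 𝕜 B) ∧
      ar1 𝕜 M.r (inDu 𝕜 B b) m ∈ Set.range (inDu 𝕜 B))
    -- every continuous derivation from `A**` into `B` is weak*-weak-continuous
    (hwc : ∀ D : Bi 𝕜 A →L[𝕜] B,
      IsDer 𝕜 (fun m n => ar1 𝕜 (ContinuousLinearMap.mul 𝕜 A) m n)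
        (fun (m : Bi 𝕜 A) (F : Bi 𝕜 B) => ar1 𝕜 M.l m F)
        (fun (F : Bi 𝕜 B) (m : Bi 𝕜 A) => ar1 𝕜 M.r F m)
        ((inDu 𝕜 B).comp D) →
      WStarWeakCont 𝕜 fun m => D m)
    -- `H^1(A, B) = {0}`
    (h1 : ∀ d : A →L[𝕜] B,
      IsDer 𝕜 (fun a b => a * b)
        (fun (a : A) (x : B) => M.l a x) (fun (x : B) (a : A) => M.r x a) d →
      IsInner 𝕜 (fun (a : A) (x : B) => M.l a x) (fun (x : B) (a : A) => M.r x a) d) :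
    -- `H^1(A**, B) = {0}`
    ∀ D : Bi 𝕜 A →L[𝕜] B,
      IsDer 𝕜 (fun m n => ar1 𝕜 (ContinuousLinearMap.mul 𝕜 A) m n)
        (fun (m : Bi 𝕜 A) (F : Bi 𝕜 B) => ar1 𝕜 M.l m F)
        (fun (F : Bi 𝕜 B) (m : Bi 𝕜 A) => ar1 𝕜 M.r F m)
        ((inDu 𝕜 B).comp D) →
      ∃ x : B, ∀ m : Bi 𝕜 A,
        inDu 𝕜 B (D m) = ar1 𝕜 M.l m (inDu 𝕜 B x) - ar1 𝕜 M.r (inDu 𝕜 B x) m :=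
  statement3_general M hwc h1

end ArensPaper
end
end

section
/- Let A be a Banach algebra with a left bounded approximate identity which is a two-sided ideal in A**, and suppose every continuous derivation D : A** → A*** is weak*-weak*-continuous. If A is weakly amenable, then A** (with the first Arens product) is weakly amenable. -/
/-!
Restrict a derivation `D : A** → A***` to `A`: the result `A → A*` is a derivation, hence inner,
implemented by some `f ∈ A*`. Subtracting the inner derivation implemented by `f`, viewed in
`A***`, leaves a derivation `E` with `⟨E a, b⟩ = 0` for `a, b ∈ A`. As `A` is an ideal in `A**`,
the derivation identity gives `E (a b) = 0`, so `E` vanishes on `A` by the left bounded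
approximate identity. Finally `E` is weak*-continuous and `A` is weak*-dense in `A**`, so `E = 0`.
-/

noncomputable section

open ContinuousLinearMap Filter Topology Function

namespace ArensPaper

variable (𝕜 : Type) [RCLike 𝕜]

variable {X Y Z : Type} [NormedAddCommGroup X] [NormedSpace 𝕜 X]
  [NormedAddCommGroup Y] [NormedSpace 𝕜 Y] [NormedAddCommGroup Z] [NormedSpace 𝕜 Z]

section

variable {𝕜}

section DualDerivation

variable {C C' : Type} [NormedAddCommGroup C] [NormedSpace 𝕜 C]
  [NormedAddCommGroup C'] [NormedSpace 𝕜 C']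

def IsDualDer (p : C →L[𝕜] C →L[𝕜] C) (δ : C →L[𝕜] Du 𝕜 C) : Prop :=
  ∀ a b c, δ (p a b) c = δ b (p c a) + δ a (p b c)

theorem isDer_dual_iff (p : C →L[𝕜] C →L[𝕜] C) (δ : C →L[𝕜] Du 𝕜 C) :
    IsDer 𝕜 (fun a b => p a b) (fun a F => F.comp (p.flip a)) (fun F a => F.comp (p a)) δ ↔
      IsDualDer p δ := by
  refine forall₂_congr fun a b => ?_
  rw [ContinuousLinearMap.ext_iff]
  rfl

def innerDer (p : C →L[𝕜] C →L[𝕜] C) (x : Du 𝕜 C) : C →L[𝕜] Du 𝕜 C :=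
  (compL 𝕜 C C 𝕜 x).comp p.flip - (compL 𝕜 C C 𝕜 x).comp p

theorem innerDer_apply_apply (p : C →L[𝕜] C →L[𝕜] C) (x : Du 𝕜 C) (a c : C) :
    innerDer p x a c = x (p c a) - x (p a c) :=
  rfl

theorem isInner_dual_iff (p : C →L[𝕜] C →L[𝕜] C) (δ : C →L[𝕜] Du 𝕜 C) :
    IsInner 𝕜 (fun a F => F.comp (p.flip a)) (fun F a => F.comp (p a)) δ ↔
      ∃ x, δ = innerDer p x := by
  refine exists_congr fun x => ?_
  rw [ContinuousLinearMap.ext_iff]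
  rfl

theorem isDualDer_innerDer {p : C →L[𝕜] C →L[𝕜] C} (hp : ∀ a b c, p (p a b) c = p a (p b c))
    (x : Du 𝕜 C) : IsDualDer p (innerDer p x) := by
  intro a b c
  simp only [innerDer_apply_apply, hp]
  abel

theorem IsDualDer.sub {p : C →L[𝕜] C →L[𝕜] C} {δ₁ δ₂ : C →L[𝕜] Du 𝕜 C}
    (h₁ : IsDualDer p δ₁) (h₂ : IsDualDer p δ₂) : IsDualDer p (δ₁ - δ₂) := by
  intro a b c
  simp only [sub_apply, h₁ a b c, h₂ a b c]
  abel

theorem IsDualDer.restrict {p : C →L[𝕜] C →L[𝕜] C} {q : C' →L[𝕜] C' →L[𝕜] C'}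
    {δ : C' →L[𝕜] Du 𝕜 C'} (hδ : IsDualDer q δ) (j : C →L[𝕜] C')
    (hj : ∀ a b, j (p a b) = q (j a) (j b)) : IsDualDer p (tr 𝕜 j ∘L δ ∘L j) := by
  intro a b c
  change δ (j (p a b)) (j c) = δ (j b) (j (p c a)) + δ (j a) (j (p b c))
  rw [hj, hj, hj, hδ]

end DualDerivation

theorem ar1_assoc {C : Type} [NormedAddCommGroup C] [NormedSpace 𝕜 C]
    {p : C →L[𝕜] C →L[𝕜] C} (hp : ∀ a b c, p (p a b) c = p a (p b c)) (F G H : Bi 𝕜 C) :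
    ar1 𝕜 p (ar1 𝕜 p F G) H = ar1 𝕜 p F (ar1 𝕜 p G H) := by
  ext f
  change F (adj 𝕜 (adj 𝕜 p) G (adj 𝕜 (adj 𝕜 p) H f)) = F (adj 𝕜 (adj 𝕜 p) (ar1 𝕜 p G H) f)
  congr 1
  ext a
  change G (adj 𝕜 p (adj 𝕜 (adj 𝕜 p) H f) a) = G (adj 𝕜 (adj 𝕜 p) H (adj 𝕜 p f a))
  congr 1
  ext b
  change H (adj 𝕜 p f (p a b)) = H (adj 𝕜 p (adj 𝕜 p f a) b)
  congr 1
  ext c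
  exact congrArg f (hp a b c)

theorem eq_zero_of_wStarCont_of_comp_inDu_eq_zero (T : Bi 𝕜 X →L[𝕜] Du 𝕜 Y)
    (hT : WStarCont 𝕜 fun m => T m) (hT0 : T.comp (inDu 𝕜 X) = 0) : T = 0 := by
  ext m y
  let φ : StrongDual 𝕜 (WeakDual 𝕜 (Du 𝕜 X)) :=
    ⟨(ContinuousLinearMap.apply 𝕜 𝕜 y ∘L T).toLinearMap ∘ₗ
      StrongDual.toWeakDual.symm.toLinearMap, (WeakDual.eval_continuous y).comp hT⟩
  -- every weak*-continuous functional on `X**` is evaluation at some point of `X*`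
  obtain ⟨f, hf⟩ := @LinearMap.dualEmbedding_surjective 𝕜 (Bi 𝕜 X) (Du 𝕜 X) _ _ _ _ _
    (topDualPairing 𝕜 (Du 𝕜 X)) φ
  have hTf : ∀ m : Bi 𝕜 X, T m y = m f := fun m => (DFunLike.congr_fun hf m).symm
  have hf0 : f = 0 := by
    ext x
    simpa [hTf] using DFunLike.congr_fun (DFunLike.congr_fun hT0 x) y
  simp [hTf, hf0]

theorem HasLBAI.eq_of_forall_mul_eq {A T : Type} [NonUnitalNormedRing A] [TopologicalSpace T]
    [T2Space T] (h : HasLBAI A) {g : A → T} (hg : Continuous g) {t : T}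
    (hmul : ∀ a b, g (a * b) = t) (a : A) : g a = t := by
  obtain ⟨ι, L, e, hL, -, he⟩ := h
  refine tendsto_nhds_unique ((hg.tendsto a).comp (he a)) ?_
  simp only [Function.comp_def, hmul, tendsto_const_nhds]

section Bidual

variable {A : Type} [NonUnitalNormedRing A] [NormedSpace 𝕜 A] [IsScalarTower 𝕜 A A]
  [SMulCommClass 𝕜 A A]

local notation "P" => ar1 𝕜 (ContinuousLinearMap.mul 𝕜 A)
local notation "ι" => inDu 𝕜 A

theorem IsDualDer.map_inDu_mul_eq_zero
    (hideal : ∀ (m : Bi 𝕜 A) (a : A), P m (ι a) ∈ Set.range ι ∧ P (ι a) m ∈ Set.range ι)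
    {δ : Bi 𝕜 A →L[𝕜] Du 𝕜 (Bi 𝕜 A)} (hδ : IsDualDer P δ)
    (hδA : ∀ a b, δ (ι a) (ι b) = 0) (a b : A) : δ (ι (a * b)) = 0 := by
  ext k
  obtain ⟨c, hc⟩ := (hideal k a).1
  obtain ⟨c', hc'⟩ := (hideal k b).2
  rw [show ι (a * b) = P (ι a) (ι b) from rfl, hδ, ← hc, ← hc', hδA, hδA, add_zero, zero_apply]

end Bidual

end

theorem statement6_general {𝕜 : Type} [RCLike 𝕜] {A : Type}
    [NonUnitalNormedRing A] [NormedSpace 𝕜 A] [IsScalarTower 𝕜 A A]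
    [SMulCommClass 𝕜 A A]
    -- `A` has a left bounded approximate identity
    (hbai : HasLBAI A)
    -- `A` is a two-sided ideal in `A**`
    (hideal : ∀ (m : Bi 𝕜 A) (a : A),
      ar1 𝕜 (ContinuousLinearMap.mul 𝕜 A) m (inDu 𝕜 A a) ∈ Set.range (inDu 𝕜 A) ∧
      ar1 𝕜 (ContinuousLinearMap.mul 𝕜 A) (inDu 𝕜 A a) m ∈ Set.range (inDu 𝕜 A))
    -- every continuous derivation `D : A** → A***` is weak*-weak*-continuous
    (hwc : ∀ D : Bi 𝕜 A →L[𝕜] Du 𝕜 (Bi 𝕜 A),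
      IsDer 𝕜 (fun m n => ar1 𝕜 (ContinuousLinearMap.mul 𝕜 A) m n)
        (fun (m : Bi 𝕜 A) (F : Du 𝕜 (Bi 𝕜 A)) =>
          F.comp ((ar1 𝕜 (ContinuousLinearMap.mul 𝕜 A)).flip m))
        (fun (F : Du 𝕜 (Bi 𝕜 A)) (m : Bi 𝕜 A) =>
          F.comp (ar1 𝕜 (ContinuousLinearMap.mul 𝕜 A) m)) D →
      WStarCont 𝕜 fun m => D m)
    -- `A` is weakly amenable
    (hwa : WeaklyAmenable 𝕜 A) :
    -- `A**` is weakly amenable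
    ∀ D : Bi 𝕜 A →L[𝕜] Du 𝕜 (Bi 𝕜 A),
      IsDer 𝕜 (fun m n => ar1 𝕜 (ContinuousLinearMap.mul 𝕜 A) m n)
        (fun (m : Bi 𝕜 A) (F : Du 𝕜 (Bi 𝕜 A)) =>
          F.comp ((ar1 𝕜 (ContinuousLinearMap.mul 𝕜 A)).flip m))
        (fun (F : Du 𝕜 (Bi 𝕜 A)) (m : Bi 𝕜 A) =>
          F.comp (ar1 𝕜 (ContinuousLinearMap.mul 𝕜 A) m)) D →
      IsInner 𝕜
        (fun (m : Bi 𝕜 A) (F : Du 𝕜 (Bi 𝕜 A)) =>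
          F.comp ((ar1 𝕜 (ContinuousLinearMap.mul 𝕜 A)).flip m))
        (fun (F : Du 𝕜 (Bi 𝕜 A)) (m : Bi 𝕜 A) =>
          F.comp (ar1 𝕜 (ContinuousLinearMap.mul 𝕜 A) m)) D := by
  intro D hD
  set P := ar1 𝕜 (ContinuousLinearMap.mul 𝕜 A)
  set ι := inDu 𝕜 A
  have hDder := (isDer_dual_iff P D).1 hD
  have hDrestrict := hDder.restrict (p := ContinuousLinearMap.mul 𝕜 A) ι fun _ _ => rfl
  obtain ⟨f, hf⟩ := (isInner_dual_iff _ _).1 (hwa _ ((isDer_dual_iff _ _).2 hDrestrict))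
  set E := D - innerDer P (inDu 𝕜 (Du 𝕜 A) f)
  have hEder : IsDualDer P E := hDder.sub (isDualDer_innerDer (ar1_assoc mul_assoc) _)
  have hEA : ∀ a b, E (ι a) (ι b) = 0 := by
    intro a b
    have hd : D (ι a) (ι b) = f (b * a) - f (a * b) :=
      DFunLike.congr_fun (DFunLike.congr_fun hf a) b
    rw [sub_apply, sub_apply, hd]
    exact sub_self _
  have hE0 : E = 0 := by
    refine eq_zero_of_wStarCont_of_comp_inDu_eq_zero E (hwc E ((isDer_dual_iff P E).2 hEder)) ?_
    ext1 a
    exact hbai.eq_of_forall_mul_eq (E.continuous.comp ι.continuous)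
      (hEder.map_inDu_mul_eq_zero hideal hEA) a
  have hDE : D = innerDer P (inDu 𝕜 (Du 𝕜 A) f) := sub_eq_zero.1 hE0
  exact (isInner_dual_iff P D).2 ⟨_, hDE⟩

/-- Let `A` be a Banach algebra with a LBAI which is a two-sided ideal in `A**`, and suppose
every continuous derivation `D : A** → A***` is weak*-weak*-continuous.  If `A` is
weakly amenable, then `A**` (first Arens product) is weakly amenable. -/
theorem statement6 {𝕜 : Type} [RCLike 𝕜] {A : Type}
    [NonUnitalNormedRing A] [NormedSpace 𝕜 A] [IsScalarTower 𝕜 A A]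
    [SMulCommClass 𝕜 A A] [CompleteSpace A]
    -- `A` has a left bounded approximate identity
    (hbai : HasLBAI A)
    -- `A` is a two-sided ideal in `A**`
    (hideal : ∀ (m : Bi 𝕜 A) (a : A),
      ar1 𝕜 (ContinuousLinearMap.mul 𝕜 A) m (inDu 𝕜 A a) ∈ Set.range (inDu 𝕜 A) ∧
      ar1 𝕜 (ContinuousLinearMap.mul 𝕜 A) (inDu 𝕜 A a) m ∈ Set.range (inDu 𝕜 A))
    -- every continuous derivation `D : A** → A***` is weak*-weak*-continuous
    (hwc : ∀ D : Bi 𝕜 A →L[𝕜] Du 𝕜 (Bi 𝕜 A),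
      IsDer 𝕜 (fun m n => ar1 𝕜 (ContinuousLinearMap.mul 𝕜 A) m n)
        (fun (m : Bi 𝕜 A) (F : Du 𝕜 (Bi 𝕜 A)) =>
          F.comp ((ar1 𝕜 (ContinuousLinearMap.mul 𝕜 A)).flip m))
        (fun (F : Du 𝕜 (Bi 𝕜 A)) (m : Bi 𝕜 A) =>
          F.comp (ar1 𝕜 (ContinuousLinearMap.mul 𝕜 A) m)) D →
      WStarCont 𝕜 fun m => D m)
    -- `A` is weakly amenable
    (hwa : WeaklyAmenable 𝕜 A) :
    -- `A**` is weakly amenable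
    ∀ D : Bi 𝕜 A →L[𝕜] Du 𝕜 (Bi 𝕜 A),
      IsDer 𝕜 (fun m n => ar1 𝕜 (ContinuousLinearMap.mul 𝕜 A) m n)
        (fun (m : Bi 𝕜 A) (F : Du 𝕜 (Bi 𝕜 A)) =>
          F.comp ((ar1 𝕜 (ContinuousLinearMap.mul 𝕜 A)).flip m))
        (fun (F : Du 𝕜 (Bi 𝕜 A)) (m : Bi 𝕜 A) =>
          F.comp (ar1 𝕜 (ContinuousLinearMap.mul 𝕜 A) m)) D →
      IsInner 𝕜
        (fun (m : Bi 𝕜 A) (F : Du 𝕜 (Bi 𝕜 A)) =>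
          F.comp ((ar1 𝕜 (ContinuousLinearMap.mul 𝕜 A)).flip m))
        (fun (F : Du 𝕜 (Bi 𝕜 A)) (m : Bi 𝕜 A) =>
          F.comp (ar1 𝕜 (ContinuousLinearMap.mul 𝕜 A) m)) D :=
  statement6_general hbai hideal hwc hwa

end ArensPaper
end
end

section
/- Let A be a Banach algebra such that A** is a two-sided ideal in the fourth dual A^{(4)} and A*** factors as a Banach A**-bimodule (A*** = A***·A** = A**·A***). If A is weakly amenable, then H^1_{w*}(A**, A***) = {0}. -/
/-!
Common definitions: duals, biduals, Arens products, module actions,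
derivations, first cohomology-vanishing predicates, weak-star continuity.
-/

noncomputable section

open ContinuousLinearMap Filter Topology Function

namespace ArensPaper

variable (𝕜 : Type) [RCLike 𝕜]

variable {X Y Z : Type} [NormedAddCommGroup X] [NormedSpace 𝕜 X]
  [NormedAddCommGroup Y] [NormedSpace 𝕜 Y] [NormedAddCommGroup Z] [NormedSpace 𝕜 Z]

/-!
Under these hypotheses `A` is reflexive. Since `A**` is an ideal in `A^{(4)}`, left
multiplication by `c ∈ A**` maps `A` into `A`, giving an operator `T_c` on `A`, and its second
transpose `T_c**` maps `A**` into `A`. Factorization of `A***` makes every functional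
`m ↦ (n m)(φ)` weak*-continuous, which identifies `c n` with `T_c** n`; so every
`F = g · c ∈ A***` is `n ↦ n(g ∘ T_c)`, an element of `A*`. Hence `A** = A`, `A*** = A*`, and a
derivation `A** → A***` is just a derivation `A → A*`, inner by weak amenability.
-/

variable {𝕜}

theorem exists_dual_eq_zero_of_notMem {E : Type} [NormedAddCommGroup E] [NormedSpace 𝕜 E]
    {S : Submodule 𝕜 E} (hS : IsClosed (S : Set E)) {x : E} (hx : x ∉ S) :
    ∃ H : Du 𝕜 E, (∀ y ∈ S, H y = 0) ∧ H x ≠ 0 := by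
  have hq : ‖(Submodule.Quotient.mk x : E ⧸ S)‖ ≠ 0 := fun h0 => hx <| by
    simpa [hS.closure_eq] using
      (QuotientAddGroup.norm_mk_eq_zero_iff_mem_closure (S := S.toAddSubgroup)).1 h0
  obtain ⟨g, -, hg⟩ := exists_dual_vector 𝕜 _ hq
  refine ⟨g.comp S.mkQL, fun y hy => ?_, ?_⟩
  · simp [(Submodule.Quotient.mk_eq_zero S).2 hy]
  · change g (Submodule.Quotient.mk x) ≠ 0
    rw [hg]
    exact_mod_cast hq

theorem mem_range_inDu_of_forall [CompleteSpace X] {k : Bi 𝕜 X}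
    (h : ∀ H : Du 𝕜 (Bi 𝕜 X), (∀ x, H (inDu 𝕜 X x) = 0) → H k = 0) :
    k ∈ Set.range (inDu 𝕜 X) := by
  let S := LinearMap.range (inDu 𝕜 X).toLinearMap
  have hS : IsClosed (S : Set (Bi 𝕜 X)) :=
    (NormedSpace.inclusionInDoubleDualLi 𝕜).isometry.isClosedEmbedding.isClosed_range
  by_contra hk
  obtain ⟨H, hHS, hHk⟩ := exists_dual_eq_zero_of_notMem hS (S := S) hk
  exact hHk (h H fun x => hHS _ ⟨x, rfl⟩)

theorem mem_range_inDu_of_bitr_mem_range [CompleteSpace X] {u : Bi 𝕜 X}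
    (h : bitr 𝕜 (inDu 𝕜 X) u ∈ Set.range (inDu 𝕜 (Bi 𝕜 X))) : u ∈ Set.range (inDu 𝕜 X) := by
  obtain ⟨w, hw⟩ := h
  have hwH : ∀ H : Du 𝕜 (Bi 𝕜 X), H w = u (H.comp (inDu 𝕜 X)) := fun H => congr($hw H)
  obtain ⟨x, rfl⟩ : w ∈ Set.range (inDu 𝕜 X) := mem_range_inDu_of_forall fun H hH => by
    rw [hwH, show H.comp (inDu 𝕜 X) = 0 from ext hH, map_zero]
  exact ⟨x, ext fun ψ => hwH (inDu 𝕜 (Du 𝕜 X) ψ)⟩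

theorem inDu_surjective_of_inDu_dual_surjective [CompleteSpace X]
    (h : Surjective (inDu 𝕜 (Du 𝕜 X))) : Surjective (inDu 𝕜 X) := fun k =>
  mem_range_inDu_of_forall fun H hH => by
    obtain ⟨φ, rfl⟩ := h H
    rw [show φ = 0 from ext hH, map_zero, zero_apply]

theorem LinearIsometry.exists_comp_eq_of_forall_mem_range {E F G : Type}
    [NormedAddCommGroup E] [NormedSpace 𝕜 E] [NormedAddCommGroup F] [NormedSpace 𝕜 F]
    [NormedAddCommGroup G] [NormedSpace 𝕜 G] (i : E →ₗᵢ[𝕜] F) (f : G →L[𝕜] F)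
    (h : ∀ x, f x ∈ Set.range i) : ∃ g : G →L[𝕜] E, ∀ x, i (g x) = f x := by
  let e := i.equivRange
  refine ⟨(e.symm : _ →L[𝕜] E).comp (f.codRestrict (LinearMap.range i.toLinearMap) h), fun x => ?_⟩
  exact congrArg Subtype.val (e.apply_symm_apply _)

section Arens

variable {A : Type} [NonUnitalNormedRing A] [NormedSpace 𝕜 A] [IsScalarTower 𝕜 A A]
  [SMulCommClass 𝕜 A A]

variable (𝕜 A) in
def IsLeftIdealInFourthDual : Prop :=
  ∀ (m : Bi 𝕜 (Bi 𝕜 A)) (c : Bi 𝕜 A),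
    ar1 𝕜 (ar1 𝕜 (ContinuousLinearMap.mul 𝕜 A)) m (inDu 𝕜 (Bi 𝕜 A) c)
      ∈ Set.range (inDu 𝕜 (Bi 𝕜 A))

variable (𝕜 A) in
def IsRightIdealInFourthDual : Prop :=
  ∀ (m : Bi 𝕜 (Bi 𝕜 A)) (c : Bi 𝕜 A),
    ar1 𝕜 (ar1 𝕜 (ContinuousLinearMap.mul 𝕜 A)) (inDu 𝕜 (Bi 𝕜 A) c) m
      ∈ Set.range (inDu 𝕜 (Bi 𝕜 A))

variable (𝕜 A) in
def ThirdDualFactorsRight : Prop :=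
  ∀ F : Du 𝕜 (Bi 𝕜 A), ∃ (g : Du 𝕜 (Bi 𝕜 A)) (c : Bi 𝕜 A),
    F = g.comp (ar1 𝕜 (ContinuousLinearMap.mul 𝕜 A) c)

local notation:70 m:70 " ⊡ " n:71 => ar1 𝕜 (ContinuousLinearMap.mul 𝕜 A) m n

theorem ar1_mul_assoc (F G H : Bi 𝕜 A) : F ⊡ G ⊡ H = F ⊡ (G ⊡ H) := by
  ext ψ
  refine congrArg F (ext fun a => congrArg G (ext fun b => congrArg H (ext fun c => ?_)))
  exact congrArg ψ (mul_assoc a b c)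

theorem bitr_inDu_ar1_inDu (m : Bi 𝕜 A) (a : A) :
    bitr 𝕜 (inDu 𝕜 A) (m ⊡ inDu 𝕜 A a) =
      ar1 𝕜 (ar1 𝕜 (ContinuousLinearMap.mul 𝕜 A)) (bitr 𝕜 (inDu 𝕜 A) m)
        (inDu 𝕜 (Bi 𝕜 A) (inDu 𝕜 A a)) :=
  rfl

theorem bitr_inDu_bitr_of_lift {c : Bi 𝕜 A} {T : A →L[𝕜] A}
    (hT : ∀ b, inDu 𝕜 A (T b) = c ⊡ inDu 𝕜 A b) (n : Bi 𝕜 A) :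
    bitr 𝕜 (inDu 𝕜 A) (bitr 𝕜 T n) =
      ar1 𝕜 (ar1 𝕜 (ContinuousLinearMap.mul 𝕜 A)) (inDu 𝕜 (Bi 𝕜 A) c)
        (bitr 𝕜 (inDu 𝕜 A) n) := by
  ext H
  exact congrArg n (ext fun b => congrArg H (hT b))

theorem isDer_tr_comp_inDu {D : Bi 𝕜 A →L[𝕜] Du 𝕜 (Bi 𝕜 A)}
    (hD : IsDer 𝕜 (fun m n => m ⊡ n)
      (fun m F => F.comp ((ar1 𝕜 (ContinuousLinearMap.mul 𝕜 A)).flip m))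
      (fun F m => F.comp (ar1 𝕜 (ContinuousLinearMap.mul 𝕜 A) m)) D) :
    IsDer 𝕜 (fun a b : A => a * b)
      (fun a f => f.comp ((ContinuousLinearMap.mul 𝕜 A).flip a))
      (fun f a => f.comp (ContinuousLinearMap.mul 𝕜 A a))
      ((tr 𝕜 (inDu 𝕜 A)).comp (D.comp (inDu 𝕜 A))) :=
  fun a b => ext fun c => DFunLike.congr_fun (hD (inDu 𝕜 A a) (inDu 𝕜 A b)) (inDu 𝕜 A c)

variable [CompleteSpace A]

theorem ar1_inDu_mem_range (hL : IsLeftIdealInFourthDual 𝕜 A) (m : Bi 𝕜 A) (a : A) :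
    m ⊡ inDu 𝕜 A a ∈ Set.range (inDu 𝕜 A) :=
  mem_range_inDu_of_bitr_mem_range (by rw [bitr_inDu_ar1_inDu]; exact hL _ _)

theorem exists_inDu_comp_eq_ar1_inDu (hL : IsLeftIdealInFourthDual 𝕜 A) (c : Bi 𝕜 A) :
    ∃ T : A →L[𝕜] A, ∀ b, inDu 𝕜 A (T b) = c ⊡ inDu 𝕜 A b :=
  LinearIsometry.exists_comp_eq_of_forall_mem_range (NormedSpace.inclusionInDoubleDualLi 𝕜)
    ((ar1 𝕜 (ContinuousLinearMap.mul 𝕜 A) c).comp (inDu 𝕜 A)) (ar1_inDu_mem_range hL c)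

theorem bitr_mem_range_of_lift (hR : IsRightIdealInFourthDual 𝕜 A) {c : Bi 𝕜 A}
    {T : A →L[𝕜] A} (hT : ∀ b, inDu 𝕜 A (T b) = c ⊡ inDu 𝕜 A b) (n : Bi 𝕜 A) :
    bitr 𝕜 T n ∈ Set.range (inDu 𝕜 A) :=
  mem_range_inDu_of_bitr_mem_range (by rw [bitr_inDu_bitr_of_lift hT]; exact hR _ _)

theorem exists_ar1_apply_eq_eval (hL : IsLeftIdealInFourthDual 𝕜 A)
    (hR : IsRightIdealInFourthDual 𝕜 A) (hF : ThirdDualFactorsRight 𝕜 A)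
    (φ : Du 𝕜 A) (n : Bi 𝕜 A) : ∃ ξ : Du 𝕜 A, ∀ m, (n ⊡ m) φ = m ξ := by
  obtain ⟨g, c, hg⟩ := hF (inDu 𝕜 (Du 𝕜 A) φ)
  obtain ⟨T, hT⟩ := exists_inDu_comp_eq_ar1_inDu hL c
  obtain ⟨x, hx⟩ := bitr_mem_range_of_lift hR hT n
  set γ := g.comp (inDu 𝕜 A)
  -- `φ̂ = g · c` and `c â = (T a)^` turn `φ · a` into `γ · T a`.
  have hφ : ∀ a, adj 𝕜 (ContinuousLinearMap.mul 𝕜 A) φ a =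
      adj 𝕜 (ContinuousLinearMap.mul 𝕜 A) γ (T a) := fun a => ext fun b => by
    change φ (a * b) = g (inDu 𝕜 A (T a) ⊡ inDu 𝕜 A b)
    rw [hT, ar1_mul_assoc, ar1_inDu_inDu, ← ContinuousLinearMap.comp_apply, ← hg]
    rfl
  refine ⟨adj 𝕜 (ContinuousLinearMap.mul 𝕜 A) γ x, fun m => ?_⟩
  calc (n ⊡ m) φ = n ((adj 𝕜 (adj 𝕜 (ContinuousLinearMap.mul 𝕜 A)) m γ).comp T) :=
        congrArg n (ext fun a => congrArg m (hφ a))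
    _ = m (adj 𝕜 (ContinuousLinearMap.mul 𝕜 A) γ x) := (DFunLike.congr_fun hx _).symm

theorem ar1_eq_bitr_of_lift (hL : IsLeftIdealInFourthDual 𝕜 A)
    (hR : IsRightIdealInFourthDual 𝕜 A) (hF : ThirdDualFactorsRight 𝕜 A) {c : Bi 𝕜 A}
    {T : A →L[𝕜] A} (hT : ∀ b, inDu 𝕜 A (T b) = c ⊡ inDu 𝕜 A b) (n : Bi 𝕜 A) :
    c ⊡ n = bitr 𝕜 T n := by
  ext ψ
  obtain ⟨ξ, hξ⟩ := exists_ar1_apply_eq_eval hL hR hF ψ c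
  have hξT : ξ = ψ.comp T := ext fun a => by
    change inDu 𝕜 A a ξ = inDu 𝕜 A (T a) ψ
    rw [← hξ, hT]
  rw [hξ, hξT]
  rfl

theorem inDu_dual_surjective (hL : IsLeftIdealInFourthDual 𝕜 A)
    (hR : IsRightIdealInFourthDual 𝕜 A) (hF : ThirdDualFactorsRight 𝕜 A) :
    Surjective (inDu 𝕜 (Du 𝕜 A)) := by
  intro F
  obtain ⟨g, c, rfl⟩ := hF F
  obtain ⟨T, hT⟩ := exists_inDu_comp_eq_ar1_inDu hL c
  refine ⟨(g.comp (inDu 𝕜 A)).comp T, ext fun n => ?_⟩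
  obtain ⟨x, hx⟩ := bitr_mem_range_of_lift hR hT n
  rw [ContinuousLinearMap.comp_apply, ar1_eq_bitr_of_lift hL hR hF hT, ← hx]
  exact (DFunLike.congr_fun hx _).symm

theorem inDu_surjective (hL : IsLeftIdealInFourthDual 𝕜 A)
    (hR : IsRightIdealInFourthDual 𝕜 A) (hF : ThirdDualFactorsRight 𝕜 A) :
    Surjective (inDu 𝕜 A) :=
  inDu_surjective_of_inDu_dual_surjective (inDu_dual_surjective hL hR hF)

end Arens

/-- Let `A` be a Banach algebra such that `A**` is a two-sided ideal in `A^{(4)}` and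
`A***` factors as a Banach `A**`-bimodule.  If `A` is weakly amenable, then
`H^1_{w*}(A**, A***) = {0}`. -/
theorem statement13 {𝕜 : Type} [RCLike 𝕜] {A : Type}
    [NonUnitalNormedRing A] [NormedSpace 𝕜 A] [IsScalarTower 𝕜 A A]
    [SMulCommClass 𝕜 A A] [CompleteSpace A]
    -- `A**` is a two-sided ideal in `A^{(4)}`
    (hideal : ∀ (m : Bi 𝕜 (Bi 𝕜 A)) (c : Bi 𝕜 A),
      ar1 𝕜 (ar1 𝕜 (ContinuousLinearMap.mul 𝕜 A)) m (inDu 𝕜 (Bi 𝕜 A) c)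
          ∈ Set.range (inDu 𝕜 (Bi 𝕜 A)) ∧
      ar1 𝕜 (ar1 𝕜 (ContinuousLinearMap.mul 𝕜 A)) (inDu 𝕜 (Bi 𝕜 A) c) m
          ∈ Set.range (inDu 𝕜 (Bi 𝕜 A)))
    -- `A***` factors: `A*** = A***·A** = A**·A***`
    (hfac : ∀ f : Du 𝕜 (Bi 𝕜 A),
      (∃ (g : Du 𝕜 (Bi 𝕜 A)) (c : Bi 𝕜 A),
        f = g.comp (ar1 𝕜 (ContinuousLinearMap.mul 𝕜 A) c)) ∧
      (∃ (c : Bi 𝕜 A) (g : Du 𝕜 (Bi 𝕜 A)),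
        f = g.comp ((ar1 𝕜 (ContinuousLinearMap.mul 𝕜 A)).flip c)))
    -- `A` is weakly amenable
    (hwa : WeaklyAmenable 𝕜 A) :
    -- `H^1_{w*}(A**, A***) = {0}`
    ∀ D : Bi 𝕜 A →L[𝕜] Du 𝕜 (Bi 𝕜 A),
      IsDer 𝕜 (fun m n => ar1 𝕜 (ContinuousLinearMap.mul 𝕜 A) m n)
        (fun (m : Bi 𝕜 A) (F : Du 𝕜 (Bi 𝕜 A)) =>
          F.comp ((ar1 𝕜 (ContinuousLinearMap.mul 𝕜 A)).flip m))
        (fun (F : Du 𝕜 (Bi 𝕜 A)) (m : Bi 𝕜 A) =>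
          F.comp (ar1 𝕜 (ContinuousLinearMap.mul 𝕜 A) m)) D →
      WStarCont 𝕜 (fun m => D m) →
      IsInner 𝕜
        (fun (m : Bi 𝕜 A) (F : Du 𝕜 (Bi 𝕜 A)) =>
          F.comp ((ar1 𝕜 (ContinuousLinearMap.mul 𝕜 A)).flip m))
        (fun (F : Du 𝕜 (Bi 𝕜 A)) (m : Bi 𝕜 A) =>
          F.comp (ar1 𝕜 (ContinuousLinearMap.mul 𝕜 A) m)) D := by
  intro D hD _
  have hsurj : Surjective (inDu 𝕜 A) :=
    inDu_surjective (fun m c => (hideal m c).1) (fun m c => (hideal m c).2) (fun F => (hfac F).1)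
  obtain ⟨f, hf⟩ := hwa _ (isDer_tr_comp_inDu hD)
  refine ⟨inDu 𝕜 (Du 𝕜 A) f, fun m => ext fun n => ?_⟩
  obtain ⟨a, rfl⟩ := hsurj m
  obtain ⟨c, rfl⟩ := hsurj n
  exact DFunLike.congr_fun (hf a) c

end ArensPaper
end
end

section
/- Let A be a dual Banach algebra and I a weak*-closed two-sided ideal of A (so that I is itself a dual Banach algebra with predual A_*/^⊥I). If H^1(A, I**) = {0}, then H^1_{w*}(A, I) = {0}. -/
/-!
Common definitions: duals, biduals, Arens products, module actions,
derivations, first cohomology-vanishing predicates, weak-star continuity.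
-/

noncomputable section

open ContinuousLinearMap Filter Topology Function

namespace ArensPaper

variable (𝕜 : Type) [RCLike 𝕜]

variable {X Y Z : Type} [NormedAddCommGroup X] [NormedSpace 𝕜 X]
  [NormedAddCommGroup Y] [NormedSpace 𝕜 Y] [NormedAddCommGroup Z] [NormedSpace 𝕜 Z]

/-- Port helper: the normed group structure on a submodule of a normed ring (the standard
`Submodule.normedAddCommGroup`, stated so that instance search finds it). -/
instance instSubmoduleNormedAddCommGroup {𝕜 : Type} [RCLike 𝕜] {A : Type} [NonUnitalNormedRing A]
    [NormedSpace 𝕜 A] (I : Submodule 𝕜 A) : NormedAddCommGroup I :=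
  Submodule.normedAddCommGroup I

/-
If `D : A → I` is a derivation, then so is its composite with `I → I**`, which is therefore
implemented by some `F ∈ I**`. Restricting `F` to the image of the predual `X` in `I*` gives
an element `u` of `X* = A`; by Helly's lemma `F` agrees with elements of `I` on every finite
subset of `X`, so `u` lies in the weak*-closure of `I`, which is `I`. Since `X` is an
`A`-submodule of `A*`, pairing with `X` shows that `u` implements `D`.
-/

variable {𝕜}

section Bidual

variable {E : Type} [NormedAddCommGroup E] [NormedSpace 𝕜 E]

-- Helly's lemma
theorem exists_forall_apply_eq_bidual_apply {ι : Type} [Finite ι] (F : Bi 𝕜 E)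
    (φ : ι → Du 𝕜 E) : ∃ b : E, ∀ i, φ i b = F (φ i) := by
  classical
  cases nonempty_fintype ι
  let T : E →ₗ[𝕜] ι → 𝕜 := LinearMap.pi fun i => (φ i : E →ₗ[𝕜] 𝕜)
  suffices (fun i => F (φ i)) ∈ LinearMap.range T by
    obtain ⟨b, hb⟩ := this
    exact ⟨b, fun i => congrFun hb i⟩
  by_contra hv
  obtain ⟨f, hfv, hfT⟩ := Submodule.exists_dual_map_eq_bot_of_notMem hv inferInstance
  set c : ι → 𝕜 := fun i => f fun j => if i = j then 1 else 0
  have hf : ∀ v, f v = ∑ i, c i * v i := fun v => by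
    simp only [LinearMap.pi_apply_eq_sum_univ f v, smul_eq_mul, c, mul_comm]
  have hc : ∑ i, c i • φ i = 0 := by
    ext b
    have hTb : f (T b) = 0 := by
      have h := Submodule.mem_map_of_mem (f := f) (LinearMap.mem_range_self T b)
      rwa [hfT, Submodule.mem_bot] at h
    simpa [hf, T] using hTb
  exact hfv (by simpa [hf, map_sum] using congrArg F hc)

theorem isDer_inDu_comp {C : Type} [NormedAddCommGroup C] [NormedSpace 𝕜 C] {p : C → C → C}
    {L R : C → E →L[𝕜] E} {D : C →L[𝕜] E} (hD : IsDer 𝕜 p (fun a x => L a x) (fun x a => R a x) D) :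
    IsDer 𝕜 p (fun a F => F.comp (tr 𝕜 (L a))) (fun F a => F.comp (tr 𝕜 (R a)))
      ((inDu 𝕜 E).comp D) := by
  intro a b
  ext φ
  simp [hD a b, tr]

end Bidual

theorem WeakDual.mem_of_isClosed_of_forall_finset_exists_eqOn {S : Set (WeakDual 𝕜 X)}
    (hS : IsClosed S) {ψ : WeakDual 𝕜 X} (h : ∀ t : Finset X, ∃ s ∈ S, ∀ x ∈ t, s x = ψ x) :
    ψ ∈ S := by
  choose s hsS hs using h
  refine hS.mem_of_tendsto (f := s) (b := atTop) ?_ (Eventually.of_forall hsS)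
  refine tendsto_iff_forall_eval_tendsto_topDualPairing.mpr fun x => ?_
  refine tendsto_const_nhds.congr' ?_
  filter_upwards [eventually_ge_atTop {x}] with t ht
  exact (hs t x (ht (Finset.mem_singleton_self x))).symm

section DualBanachAlgebra

variable {A : Type} [NonUnitalNormedRing A] [NormedSpace 𝕜 A] (j : A ≃ₗᵢ[𝕜] Du 𝕜 X)
  (I : Submodule 𝕜 A)

-- `x ↦ (x mod ⊥I)`, the predual `X/⊥I` of `I` mapped into `I*`
def predualRestrict : X →L[𝕜] Du 𝕜 I :=
  (tr 𝕜 ((j.toContinuousLinearEquiv : A →L[𝕜] Du 𝕜 X).comp I.subtypeL)).comp (inDu 𝕜 X)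

@[simp]
theorem predualRestrict_apply (x : X) (z : I) : predualRestrict j I x z = j z x := rfl

theorem eq_of_forall_predualRestrict_apply_eq {u v : I}
    (h : ∀ x, predualRestrict j I x u = predualRestrict j I x v) : u = v :=
  Subtype.ext (j.injective (ContinuousLinearMap.ext h))

theorem symm_comp_predualRestrict_mem
    (hwcl : IsClosed {x : WeakDual 𝕜 X | j.symm (show Du 𝕜 X from x) ∈ I}) (F : Bi 𝕜 I) :
    j.symm (F.comp (predualRestrict j I)) ∈ I := by
  refine WeakDual.mem_of_isClosed_of_forall_finset_exists_eqOn hwcl fun t => ?_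
  obtain ⟨b, hb⟩ := exists_forall_apply_eq_bidual_apply F fun x : t => predualRestrict j I x
  refine ⟨j b, ?_, fun x hx => hb ⟨x, hx⟩⟩
  show j.symm (j b) ∈ I
  simp

variable {j} [IsScalarTower 𝕜 A A] [SMulCommClass 𝕜 A A]

theorem exists_predualRestrict_comp_mulLRes (hdual : IsDualBanachAlgebra 𝕜 j) (a : A)
    (h : ∀ z : I, a * (z : A) ∈ I) (x : X) :
    ∃ y, (predualRestrict j I x).comp (mulLRes 𝕜 I a h) = predualRestrict j I y := by
  obtain ⟨y, hy⟩ := (hdual a x).2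
  exact ⟨y, ContinuousLinearMap.ext fun z => (congrArg (fun g => g (z : A)) hy).symm⟩

theorem exists_predualRestrict_comp_mulRRes (hdual : IsDualBanachAlgebra 𝕜 j) (a : A)
    (h : ∀ z : I, (z : A) * a ∈ I) (x : X) :
    ∃ y, (predualRestrict j I x).comp (mulRRes 𝕜 I a h) = predualRestrict j I y := by
  obtain ⟨y, hy⟩ := (hdual a x).1
  exact ⟨y, ContinuousLinearMap.ext fun z => (congrArg (fun g => g (z : A)) hy).symm⟩

theorem isInner_of_isInner_inDu_comp (hdual : IsDualBanachAlgebra 𝕜 j)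
    (hI : ∀ (a : A) (z : I), a * (z : A) ∈ I ∧ (z : A) * a ∈ I)
    (hwcl : IsClosed {x : WeakDual 𝕜 X | j.symm (show Du 𝕜 X from x) ∈ I}) {D : A →L[𝕜] I}
    (hD : IsInner 𝕜 (fun a F => F.comp (tr 𝕜 (mulLRes 𝕜 I a fun z => (hI a z).1)))
      (fun F a => F.comp (tr 𝕜 (mulRRes 𝕜 I a fun z => (hI a z).2))) ((inDu 𝕜 I).comp D)) :
    IsInner 𝕜 (fun a z => mulLRes 𝕜 I a (fun y => (hI a y).1) z)
      (fun z a => mulRRes 𝕜 I a (fun y => (hI a y).2) z) D := by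
  obtain ⟨F, hF⟩ := hD
  set Φ := predualRestrict j I
  set u : I := ⟨j.symm (F.comp Φ), symm_comp_predualRestrict_mem j I hwcl F⟩
  have hu : ∀ y, Φ y u = F (Φ y) := fun y => by simp [Φ, u]
  refine ⟨u, fun a => eq_of_forall_predualRestrict_apply_eq j I fun x => ?_⟩
  obtain ⟨yl, hyl⟩ := exists_predualRestrict_comp_mulLRes I hdual a (fun z => (hI a z).1) x
  obtain ⟨yr, hyr⟩ := exists_predualRestrict_comp_mulRRes I hdual a (fun z => (hI a z).2) x
  calc Φ x (D a)
      = F ((Φ x).comp (mulLRes 𝕜 I a _)) - F ((Φ x).comp (mulRRes 𝕜 I a _)) :=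
        congrArg (· (Φ x)) (hF a)
    _ = Φ yl u - Φ yr u := by rw [hyl, hyr, hu, hu]
    _ = Φ x (mulLRes 𝕜 I a _ u - mulRRes 𝕜 I a _ u) := by
        rw [map_sub, ← hyl, ← hyr]
        rfl

end DualBanachAlgebra

theorem statement14_general {𝕜 : Type} [RCLike 𝕜] {A : Type}
    [NonUnitalNormedRing A] [NormedSpace 𝕜 A] [IsScalarTower 𝕜 A A]
    [SMulCommClass 𝕜 A A]
    {X : Type} [NormedAddCommGroup X] [NormedSpace 𝕜 X]
    -- `A` is a dual Banach algebra with predual `X`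
    (j : A ≃ₗᵢ[𝕜] Du 𝕜 X) (hdual : IsDualBanachAlgebra 𝕜 j)
    -- `I` is a two-sided ideal of `A`
    (I : Submodule 𝕜 A)
    (hI : ∀ (a : A) (x : I), a * (x : A) ∈ I ∧ (x : A) * a ∈ I)
    -- `I` is weak*-closed
    (hwcl : IsClosed {x : WeakDual 𝕜 X | j.symm (show Du 𝕜 X from x) ∈ I})
    -- `H^1(A, I**) = {0}`
    (h1 : ∀ D : A →L[𝕜] Du 𝕜 (Du 𝕜 I),
      IsDer 𝕜 (fun a b => a * b)
        (fun (a : A) (F : Du 𝕜 (Du 𝕜 I)) =>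
          F.comp (tr 𝕜 (mulLRes 𝕜 I a fun x => (hI a x).1)))
        (fun (F : Du 𝕜 (Du 𝕜 I)) (a : A) =>
          F.comp (tr 𝕜 (mulRRes 𝕜 I a fun x => (hI a x).2))) D →
      IsInner 𝕜
        (fun (a : A) (F : Du 𝕜 (Du 𝕜 I)) =>
          F.comp (tr 𝕜 (mulLRes 𝕜 I a fun x => (hI a x).1)))
        (fun (F : Du 𝕜 (Du 𝕜 I)) (a : A) =>
          F.comp (tr 𝕜 (mulRRes 𝕜 I a fun x => (hI a x).2))) D) :
    -- `H^1_{w*}(A, I) = {0}`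
    ∀ D : A →L[𝕜] I,
      IsDer 𝕜 (fun a b => a * b)
        (fun (a : A) (x : I) => mulLRes 𝕜 I a (fun y => (hI a y).1) x)
        (fun (x : I) (a : A) => mulRRes 𝕜 I a (fun y => (hI a y).2) x) D →
      -- `D` is weak*-weak*-continuous
      (Continuous fun x : WeakDual 𝕜 X =>
        (show WeakDual 𝕜 X from j (I.subtypeL (D (j.symm (show Du 𝕜 X from x)))))) →
      IsInner 𝕜
        (fun (a : A) (x : I) => mulLRes 𝕜 I a (fun y => (hI a y).1) x)
        (fun (x : I) (a : A) => mulRRes 𝕜 I a (fun y => (hI a y).2) x) D := by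
  intro D hD _
  exact isInner_of_isInner_inDu_comp I hdual hI hwcl (h1 _ (isDer_inDu_comp hD))

/-- Let `A` be a dual Banach algebra (with predual `X`) and `I` a weak*-closed two-sided
ideal of `A`.  If `H^1(A, I**) = {0}`, then `H^1_{w*}(A, I) = {0}`. -/
theorem statement14 {𝕜 : Type} [RCLike 𝕜] {A : Type}
    [NonUnitalNormedRing A] [NormedSpace 𝕜 A] [IsScalarTower 𝕜 A A]
    [SMulCommClass 𝕜 A A] [CompleteSpace A]
    {X : Type} [NormedAddCommGroup X] [NormedSpace 𝕜 X] [CompleteSpace X]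
    -- `A` is a dual Banach algebra with predual `X`
    (j : A ≃ₗᵢ[𝕜] Du 𝕜 X) (hdual : IsDualBanachAlgebra 𝕜 j)
    -- `I` is a two-sided ideal of `A`
    (I : Submodule 𝕜 A)
    (hI : ∀ (a : A) (x : I), a * (x : A) ∈ I ∧ (x : A) * a ∈ I)
    -- `I` is weak*-closed
    (hwcl : IsClosed {x : WeakDual 𝕜 X | j.symm (show Du 𝕜 X from x) ∈ I})
    -- `H^1(A, I**) = {0}`
    (h1 : ∀ D : A →L[𝕜] Du 𝕜 (Du 𝕜 I),
      IsDer 𝕜 (fun a b => a * b)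
        (fun (a : A) (F : Du 𝕜 (Du 𝕜 I)) =>
          F.comp (tr 𝕜 (mulLRes 𝕜 I a fun x => (hI a x).1)))
        (fun (F : Du 𝕜 (Du 𝕜 I)) (a : A) =>
          F.comp (tr 𝕜 (mulRRes 𝕜 I a fun x => (hI a x).2))) D →
      IsInner 𝕜
        (fun (a : A) (F : Du 𝕜 (Du 𝕜 I)) =>
          F.comp (tr 𝕜 (mulLRes 𝕜 I a fun x => (hI a x).1)))
        (fun (F : Du 𝕜 (Du 𝕜 I)) (a : A) =>
          F.comp (tr 𝕜 (mulRRes 𝕜 I a fun x => (hI a x).2))) D) :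
    -- `H^1_{w*}(A, I) = {0}`
    ∀ D : A →L[𝕜] I,
      IsDer 𝕜 (fun a b => a * b)
        (fun (a : A) (x : I) => mulLRes 𝕜 I a (fun y => (hI a y).1) x)
        (fun (x : I) (a : A) => mulRRes 𝕜 I a (fun y => (hI a y).2) x) D →
      -- `D` is weak*-weak*-continuous
      (Continuous fun x : WeakDual 𝕜 X =>
        (show WeakDual 𝕜 X from j (I.subtypeL (D (j.symm (show Du 𝕜 X from x)))))) →
      IsInner 𝕜
        (fun (a : A) (x : I) => mulLRes 𝕜 I a (fun y => (hI a y).1) x)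
        (fun (x : I) (a : A) => mulRRes 𝕜 I a (fun y => (hI a y).2) x) D :=
  statement14_general j hdual I hI hwcl h1

end ArensPaper
end
end
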